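/- arXiv:2510.24191 — 2 statements merged into one kernel-verified Lean document; each statement's English description precedes it below -/
import Mathlib

section
/- Consider the linear system x_{t+1} = A x_t + B u_t + w_t, y_t = C x_t + D u_t with A ∈ ℝ^{n×n}, C ∈ ℝ^{p×n}, and a sampling collection K generated by a bounded sequence D. If there exists a finite T ∈ ℕ such that for every t > T the sample-based observability matrix formed with the time indices in the set K_1 ∩ [t−T−1, t−1] (i.e., the matrix obtained by stacking the block rows C A^{s} for s ∈ K_1 ∩ [t−T−1, t−1] in increasing order of s) has full column rank n, then the system is sample-based exponentially i-IOSS with respect to K. -/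
open scoped Classical

noncomputable section

/-- Squared weighted norm `‖v‖²_P = vᵀ P v`. -/
def normSq {k : ℕ} (P : Matrix (Fin k) (Fin k) ℝ) (v : Fin k → ℝ) : ℝ :=
  dotProduct v (P.mulVec v)

/-- Sampling set `K_i` generated by the sequence `d` (here `i` is zero-based, so
`sampleSet d 0` is `K_1`): its elements are `t_j^i = d_i + d_{i+1} + ⋯ + d_{i+j-1}`. -/
def sampleSet (d : ℕ → ℕ) (i : ℕ) : Set ℕ :=
  {t | ∃ j : ℕ, t = ∑ l ∈ Finset.range (j + 1), d (i + l)}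

/-- The linear system `x_{t+1} = A x_t + B u_t + w_t`, `y_t = C x_t + D u_t` is sample-based
exponentially i-IOSS with respect to the sampling collection `K = {K_i}` generated by `d`. -/
def sampleBasedExpIIOSS {n m p : ℕ} (A : Matrix (Fin n) (Fin n) ℝ) (B : Matrix (Fin n) (Fin m) ℝ)
    (C : Matrix (Fin p) (Fin n) ℝ) (D : Matrix (Fin p) (Fin m) ℝ) (d : ℕ → ℕ) : Prop :=
  ∃ (P1 P2 Q : Matrix (Fin n) (Fin n) ℝ) (R : Matrix (Fin p) (Fin p) ℝ) (η : ℝ),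
    P1.PosDef ∧ P2.PosDef ∧ Q.PosSemidef ∧ R.PosSemidef ∧ 0 ≤ η ∧ η < 1 ∧
    ∀ (x xt : ℕ → Fin n → ℝ) (u : ℕ → Fin m → ℝ) (w wt : ℕ → Fin n → ℝ),
      (∀ t, x (t + 1) = A.mulVec (x t) + B.mulVec (u t) + w t) →
      (∀ t, xt (t + 1) = A.mulVec (xt t) + B.mulVec (u t) + wt t) →
      ∀ t i : ℕ,
        normSq P1 (x t - xt t) ≤
          η ^ t * normSq P2 (x 0 - xt 0)
          + ∑ j ∈ Finset.range t, η ^ (t - j - 1) * normSq Q (w j - wt j)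
          + ∑ j ∈ Finset.range t, Set.indicator (sampleSet d i)
              (fun j => η ^ (t - j - 1) * normSq R
                ((C.mulVec (x j) + D.mulVec (u j)) - (C.mulVec (xt j) + D.mulVec (u j)))) j

/-!
Write `e = x - x̃`: it satisfies `e_{s+1} = A e_s + (w_s - w̃_s)`, and the output difference is
`C e_s`. The windows of `K_1` away from time `0` only see rows `C A^s` with `s ≥ 1`, so `A` is
invertible; shifting time by `d_1 + ⋯ + d_{i-1}` then shows that every window
`[t - T - 1, t - 1]` of every `K_i` observes the state at its start. Only finitely many offset
patterns `S ⊆ {0, …, T}` occur, so a single constant bounds `‖e_{t-T-1}‖` by the outputs sampled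
in the window plus the disturbances in it, and propagating over `T + 1` steps bounds `‖e_t‖`.
Every weight `(1/2)^(t-j-1)` inside the window is at least `2^(-T)`, which turns the squared window
bound into the i-IOSS estimate with `η = 1/2`; before the first full window the initial state
takes the place of the outputs.
-/

open Finset Matrix

attribute [local instance] Matrix.linftyOpNormedAddCommGroup

theorem exists_norm_le_mul_sum_norm_of_jointly_injective {E F ι : Type*} [NormedAddCommGroup E]
    [NormedSpace ℝ E] [FiniteDimensional ℝ E] [NormedAddCommGroup F] [NormedSpace ℝ F]
    (f : ι → E →ₗ[ℝ] F) (S : Finset ι) (hf : ∀ u, (∀ s ∈ S, f s u = 0) → u = 0) :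
    ∃ c, 0 ≤ c ∧ ∀ u, ‖u‖ ≤ c * ∑ s ∈ S, ‖f s u‖ := by
  obtain ⟨K, -, hK⟩ := (LinearMap.pi fun s : S => f s).exists_antilipschitzWith <|
    LinearMap.ker_eq_bot'.mpr fun u hu => hf u fun s hs => congrFun hu ⟨s, hs⟩
  refine ⟨K, K.coe_nonneg, fun u => (hK.le_mul_norm (map_zero _) u).trans ?_⟩
  gcongr
  refine (pi_norm_le_iff_of_nonneg (by positivity)).mpr fun s => ?_
  rw [← sum_coe_sort S]
  exact single_le_sum (f := fun s : S => ‖f s u‖) (fun _ _ => norm_nonneg _) (mem_univ s)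

variable {n p : Type*} [Fintype n] [DecidableEq n]

def sampledObservabilityMatrix (A : Matrix n n ℝ) (C : Matrix p n ℝ) (S : Finset ℕ) :
    Matrix (S × p) n ℝ :=
  Matrix.of fun ri j => (C * A ^ (ri.1 : ℕ)) ri.2 j

def ObservableOn (A : Matrix n n ℝ) (C : Matrix p n ℝ) (S : Finset ℕ) : Prop :=
  ∀ u, (∀ s ∈ S, (C * A ^ s) *ᵥ u = 0) → u = 0

namespace ObservableOn

variable {A : Matrix n n ℝ} {C : Matrix p n ℝ} {S S' : Finset ℕ}

theorem of_rank_eq (h : (sampledObservabilityMatrix A C S).rank = Fintype.card n) :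
    ObservableOn A C S := by
  have hker : LinearMap.ker (sampledObservabilityMatrix A C S).mulVecLin = ⊥ := by
    have := (sampledObservabilityMatrix A C S).mulVecLin.finrank_range_add_finrank_ker
    rw [← Matrix.rank, h, Module.finrank_fintype_fun_eq_card] at this
    exact Submodule.finrank_eq_zero.mp (by omega)
  exact fun u hu =>
    ker_mulVecLin_eq_bot_iff.mp hker u <| funext fun ri => congrFun (hu _ ri.1.2) ri.2

theorem mono (h : ObservableOn A C S) (hS : S ⊆ S') : ObservableOn A C S' :=
  fun u hu => h u fun s hs => hu s (hS hs)

theorem isUnit (h : ObservableOn A C S) (hS : ∀ s ∈ S, 0 < s) : IsUnit A := by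
  refine mulVec_injective_iff_isUnit.mp <| (injective_iff_map_eq_zero A.mulVecLin).mpr
    fun u hu => h u fun s hs => ?_
  obtain ⟨k, rfl⟩ := Nat.exists_eq_add_of_lt (hS s hs)
  rw [zero_add, pow_succ, ← Matrix.mul_assoc, ← mulVec_mulVec]
  simp [show A *ᵥ u = 0 from hu]

theorem of_image_add (hA : IsUnit A) (k : ℕ) (h : ObservableOn A C (S.image (· + k))) :
    ObservableOn A C S := by
  intro u hu
  obtain ⟨w, rfl⟩ := mulVec_surjective_iff_isUnit.mpr (hA.pow k) u
  have hw : w = 0 := h w <| by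
    simp only [mem_image, forall_exists_index, and_imp, forall_apply_eq_imp_iff₂]
    intro s hs
    rw [pow_add, ← Matrix.mul_assoc, ← mulVec_mulVec, hu s hs]
  simp [hw]

theorem exists_norm_le_mul_sum [Fintype p] (h : ObservableOn A C S) :
    ∃ c, 0 ≤ c ∧ ∀ u, ‖u‖ ≤ c * ∑ s ∈ S, ‖(C * A ^ s) *ᵥ u‖ :=
  exists_norm_le_mul_sum_norm_of_jointly_injective (fun s => (C * A ^ s).mulVecLin) S fun u hu => h u hu

end ObservableOn

theorem sub_sum_range_mem_sampleSet {d : ℕ → ℕ} {i s : ℕ} (hs : s ∈ sampleSet d 0)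
    (h : ∑ l ∈ range i, d l < s) : s - ∑ l ∈ range i, d l ∈ sampleSet d i := by
  obtain ⟨m, rfl⟩ := hs
  simp only [zero_add] at h ⊢
  have him : i ≤ m := by
    by_contra! hmi
    exact h.not_ge (sum_le_sum_of_subset (range_subset_range.mpr hmi))
  refine ⟨m - i, ?_⟩
  rw [show m + 1 = i + (m - i + 1) by omega, sum_range_add, Nat.add_sub_cancel_left]

theorem observableOn_sampleSet_window {A : Matrix n n ℝ} {C : Matrix p n ℝ} {d : ℕ → ℕ} {T : ℕ}
    (hobs : ∀ t, T < t → ObservableOn A C ((Icc (t - T - 1) (t - 1)).filter (· ∈ sampleSet d 0)))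
    (hA : IsUnit A) (i : ℕ) {s : ℕ} (hs : 0 < s) :
    ObservableOn A C (((Ico s (s + (T + 1))).filter (· ∈ sampleSet d i)).image (· - s)) := by
  set D := ∑ l ∈ range i, d l
  refine ObservableOn.of_image_add hA (s + D) ((hobs (s + D + T + 1) (by omega)).mono ?_)
  intro j hj
  simp only [mem_filter, mem_Icc] at hj
  obtain ⟨⟨hj₁, hj₂⟩, hjK⟩ := hj
  have hDj : D < j := by omega
  simp only [mem_image, mem_filter, mem_Ico]
  exact ⟨j - D - s, ⟨j - D, ⟨⟨by omega, by omega⟩, sub_sum_range_mem_sampleSet hjK hDj⟩, rfl⟩,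
    by omega⟩

theorem exists_uniform_window_bound [Fintype p] (A : Matrix n n ℝ) (C : Matrix p n ℝ) (T : ℕ) :
    ∃ c, 0 ≤ c ∧ ∀ s (W : Finset ℕ), W ⊆ Ico s (s + (T + 1)) →
      ObservableOn A C (W.image (· - s)) →
      ∀ u, ‖u‖ ≤ c * ∑ j ∈ W, ‖(C * A ^ (j - s)) *ᵥ u‖ := by
  have hpattern : ∀ S : Finset ℕ, ∃ c, 0 ≤ c ∧
      (ObservableOn A C S → ∀ u, ‖u‖ ≤ c * ∑ r ∈ S, ‖(C * A ^ r) *ᵥ u‖) := by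
    intro S
    by_cases hS : ObservableOn A C S
    · obtain ⟨c, hc, hb⟩ := hS.exists_norm_le_mul_sum
      exact ⟨c, hc, fun _ => hb⟩
    · exact ⟨0, le_rfl, fun h => absurd h hS⟩
  choose c hc₀ hc using hpattern
  -- only finitely many offset patterns `S ⊆ {0, …, T}` occur
  refine ⟨∑ S ∈ (range (T + 1)).powerset, c S, sum_nonneg fun S _ => hc₀ S,
    fun s W hW hobs u => ?_⟩
  have hW' : ∀ j ∈ W, s ≤ j ∧ j < s + (T + 1) := fun j hj => mem_Ico.mp (hW hj)
  have hS : W.image (· - s) ∈ (range (T + 1)).powerset := by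
    simp only [mem_powerset, subset_iff, mem_image, mem_range, forall_exists_index, and_imp,
      forall_apply_eq_imp_iff₂]
    intro j hj
    have := hW' j hj
    omega
  have hinj : Set.InjOn (· - s) W := fun a ha b hb hab => by
    have := hW' a ha
    have := hW' b hb
    simp only at hab
    omega
  calc ‖u‖ ≤ c (W.image (· - s)) * ∑ r ∈ W.image (· - s), ‖(C * A ^ r) *ᵥ u‖ := hc _ hobs u
    _ = c (W.image (· - s)) * ∑ j ∈ W, ‖(C * A ^ (j - s)) *ᵥ u‖ := by rw [sum_image hinj]
    _ ≤ _ := by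
      gcongr
      exact single_le_sum (fun S _ => hc₀ S) hS

theorem exists_norm_pow_mulVec_le (A : Matrix n n ℝ) (N : ℕ) :
    ∃ M, 0 < M ∧ ∀ k ≤ N, ∀ x, ‖A ^ k *ᵥ x‖ ≤ M * ‖x‖ := by
  refine ⟨1 + ∑ k ∈ range (N + 1), ‖A ^ k‖, by positivity,
    fun k hk x => (linfty_opNorm_mulVec _ _).trans ?_⟩
  gcongr
  exact (single_le_sum (fun k _ => norm_nonneg (A ^ k)) (mem_range.mpr (by omega))).trans
    (le_add_of_nonneg_left zero_le_one)

section Recurrence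

variable [Fintype p] {A : Matrix n n ℝ} {e v : ℕ → n → ℝ} (he : ∀ s, e (s + 1) = A *ᵥ e s + v s)
include he

theorem eq_pow_mulVec_add_sum (s r : ℕ) :
    e (s + r) = A ^ r *ᵥ e s + ∑ l ∈ range r, A ^ (r - 1 - l) *ᵥ v (s + l) := by
  induction r with
  | zero => simp
  | succ r ih =>
    have hpow : ∀ l ∈ range r, A *ᵥ (A ^ (r - 1 - l) *ᵥ v (s + l)) = A ^ (r - l) *ᵥ v (s + l) := by
      intro l hl
      rw [mulVec_mulVec, ← pow_succ', show r - 1 - l + 1 = r - l by grind]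
    rw [← add_assoc, he, ih, mulVec_add, mulVec_mulVec, ← pow_succ', mulVec_sum,
      sum_congr rfl hpow, sum_range_succ]
    simp [add_assoc]

variable {T : ℕ} {M : ℝ} (hM : ∀ k ≤ T + 1, ∀ x, ‖A ^ k *ᵥ x‖ ≤ M * ‖x‖)
include hM

theorem norm_sub_pow_mulVec_le {s r : ℕ} (hr : r ≤ T + 1) :
    ‖e (s + r) - A ^ r *ᵥ e s‖ ≤ M * ∑ j ∈ Ico s (s + r), ‖v j‖ := by
  rw [eq_pow_mulVec_add_sum he, add_sub_cancel_left, sum_Ico_eq_sum_range, Nat.add_sub_cancel_left,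
    mul_sum]
  exact (norm_sum_le _ _).trans <| sum_le_sum fun l hl => hM _ (by omega) _

theorem norm_le_mul_norm_add_sum {s r : ℕ} (hr : r ≤ T + 1) :
    ‖e (s + r)‖ ≤ M * (‖e s‖ + ∑ j ∈ Ico s (s + r), ‖v j‖) := by
  calc ‖e (s + r)‖ ≤ ‖A ^ r *ᵥ e s‖ + ‖e (s + r) - A ^ r *ᵥ e s‖ := norm_le_insert' _ _
    _ ≤ M * ‖e s‖ + M * ∑ j ∈ Ico s (s + r), ‖v j‖ :=
      add_le_add (hM r hr _) (norm_sub_pow_mulVec_le he hM hr)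
    _ = _ := by ring

theorem norm_le_of_window_bound (hM₀ : 0 ≤ M) (C : Matrix p n ℝ) {c : ℝ} (hc : 0 ≤ c) {s : ℕ}
    {W : Finset ℕ} (hW : W ⊆ Ico s (s + (T + 1))) (hobs : ∀ u, ‖u‖ ≤ c * ∑ j ∈ W, ‖(C * A ^ (j - s)) *ᵥ u‖) :
    ‖e s‖ ≤ c * (∑ j ∈ W, ‖C *ᵥ e j‖
      + (T + 1) * (‖C‖ * (M * ∑ j ∈ Ico s (s + (T + 1)), ‖v j‖))) := by
  set V := ∑ j ∈ Ico s (s + (T + 1)), ‖v j‖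
  have hrow : ∀ j ∈ W, ‖(C * A ^ (j - s)) *ᵥ e s‖ ≤ ‖C *ᵥ e j‖ + ‖C‖ * (M * V) := by
    intro j hj
    obtain ⟨hsj, hjt⟩ := mem_Ico.mp (hW hj)
    have hforced := norm_sub_pow_mulVec_le he hM (s := s) (r := j - s) (by omega)
    rw [Nat.add_sub_cancel' hsj] at hforced
    have hV : ∑ j ∈ Ico s j, ‖v j‖ ≤ V :=
      sum_le_sum_of_subset_of_nonneg (Ico_subset_Ico_right hjt.le) fun _ _ _ => norm_nonneg _
    calc ‖(C * A ^ (j - s)) *ᵥ e s‖ = ‖C *ᵥ e j - C *ᵥ (e j - A ^ (j - s) *ᵥ e s)‖ := by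
          rw [← mulVec_mulVec, mulVec_sub, sub_sub_cancel]
      _ ≤ ‖C *ᵥ e j‖ + ‖C‖ * ‖e j - A ^ (j - s) *ᵥ e s‖ :=
          (norm_sub_le _ _).trans (add_le_add_right (linfty_opNorm_mulVec _ _) _)
      _ ≤ ‖C *ᵥ e j‖ + ‖C‖ * (M * V) := by
          gcongr
          exact hforced.trans (mul_le_mul_of_nonneg_left hV hM₀)
  have hcard : (W.card : ℝ) ≤ T + 1 := by
    have := card_le_card hW
    rw [Nat.card_Ico, Nat.add_sub_cancel_left] at this
    exact_mod_cast this
  calc ‖e s‖ ≤ c * ∑ j ∈ W, ‖(C * A ^ (j - s)) *ᵥ e s‖ := hobs _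
    _ ≤ c * ∑ j ∈ W, (‖C *ᵥ e j‖ + ‖C‖ * (M * V)) := by gcongr with j hj; exact hrow j hj
    _ = c * (∑ j ∈ W, ‖C *ᵥ e j‖ + W.card * (‖C‖ * (M * V))) := by
      rw [sum_add_distrib, sum_const, nsmul_eq_mul]
    _ ≤ _ := by gcongr

end Recurrence

theorem one_le_two_pow_mul_half_pow {k T : ℕ} (h : k ≤ T) : 1 ≤ (2 : ℝ) ^ T * (1 / 2) ^ k :=
  calc (1 : ℝ) = 2 ^ k * (1 / 2) ^ k := by rw [← mul_pow]; norm_num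
    _ ≤ 2 ^ T * (1 / 2) ^ k := by gcongr; norm_num

theorem sum_filter_Ico_le_two_pow_mul (K : Set ℕ) {f : ℕ → ℝ} (hf : ∀ j, 0 ≤ f j) (T t : ℕ) :
    ∑ j ∈ (Ico (t - (T + 1)) t).filter (· ∈ K), f j
      ≤ 2 ^ T * ∑ j ∈ range t, K.indicator (fun j => (1 / 2) ^ (t - j - 1) * f j) j := by
  calc ∑ j ∈ (Ico (t - (T + 1)) t).filter (· ∈ K), f j
        ≤ ∑ j ∈ (Ico (t - (T + 1)) t).filter (· ∈ K), 2 ^ T * ((1 / 2) ^ (t - j - 1) * f j) := by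
          refine sum_le_sum fun j hj => ?_
          have hj' := mem_Ico.mp (mem_filter.mp hj).1
          rw [← mul_assoc]
          exact le_mul_of_one_le_left (hf j) (one_le_two_pow_mul_half_pow (by omega))
    _ = 2 ^ T * ∑ j ∈ Ico (t - (T + 1)) t,
          K.indicator (fun j => (1 / 2) ^ (t - j - 1) * f j) j := by
          rw [sum_filter, mul_sum]
          refine sum_congr rfl fun j _ => ?_
          by_cases hj : j ∈ K <;> simp [hj]
    _ ≤ _ := by
          refine mul_le_mul_of_nonneg_left (sum_le_sum_of_subset_of_nonneg
            (fun j hj => mem_range.mpr (mem_Ico.mp hj).2) fun j _ _ => ?_) (by positivity)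
          exact Set.indicator_nonneg (fun j _ => mul_nonneg (by positivity) (hf j)) j

theorem sq_sum_filter_Ico_le (K : Set ℕ) (f : ℕ → ℝ) (T t : ℕ) :
    (∑ j ∈ (Ico (t - (T + 1)) t).filter (· ∈ K), f j) ^ 2
      ≤ (T + 1) * 2 ^ T *
        ∑ j ∈ range t, K.indicator (fun j => (1 / 2) ^ (t - j - 1) * f j ^ 2) j := by
  have hcard : (((Ico (t - (T + 1)) t).filter (· ∈ K)).card : ℝ) ≤ T + 1 := by
    have hIco : (Ico (t - (T + 1)) t).card ≤ T + 1 := by simp; omega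
    exact_mod_cast (card_filter_le _ _).trans hIco
  calc _ ≤ ((Ico (t - (T + 1)) t).filter (· ∈ K)).card
          * ∑ j ∈ (Ico (t - (T + 1)) t).filter (· ∈ K), f j ^ 2 := sq_sum_le_card_mul_sum_sq
    _ ≤ (T + 1) * (2 ^ T *
          ∑ j ∈ range t, K.indicator (fun j => (1 / 2) ^ (t - j - 1) * f j ^ 2) j) := by
          gcongr
          exact sum_filter_Ico_le_two_pow_mul K (fun j => sq_nonneg _) T t
    _ = _ := by ring

def iossBound (η : ℝ) (K : Set ℕ) (a : ℝ) (b y : ℕ → ℝ) (t : ℕ) : ℝ :=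
  η ^ t * a + ∑ j ∈ range t, η ^ (t - j - 1) * b j
    + ∑ j ∈ range t, K.indicator (fun j => η ^ (t - j - 1) * y j) j

theorem iossBound_mono {η : ℝ} (hη : 0 ≤ η) (K : Set ℕ) {a a' : ℝ} {b b' y y' : ℕ → ℝ} (ha : a ≤ a')
    (hb : ∀ j, b j ≤ b' j) (hy : ∀ j, y j ≤ y' j) (t : ℕ) :
    iossBound η K a b y t ≤ iossBound η K a' b' y' t := by
  unfold iossBound
  gcongr with j _ j _
  exacts [hb j, hy j]

theorem mul_iossBound (c η : ℝ) (K : Set ℕ) (a : ℝ) (b y : ℕ → ℝ) (t : ℕ) :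
    c * iossBound η K a b y t = iossBound η K (c * a) (fun j => c * b j) (fun j => c * y j) t := by
  simp only [iossBound, mul_add, mul_sum, Set.indicator_apply, mul_ite, mul_zero]
  ring_nf

theorem sq_norm_le_dotProduct_self {ι : Type*} [Fintype ι] (v : ι → ℝ) : ‖v‖ ^ 2 ≤ v ⬝ᵥ v := by
  have hv : 0 ≤ v ⬝ᵥ v := sum_nonneg fun i _ => mul_self_nonneg (v i)
  refine (Real.le_sqrt (norm_nonneg _) hv).mp <|
    (pi_norm_le_iff_of_nonneg (Real.sqrt_nonneg _)).mpr fun i => ?_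
  rw [Real.norm_eq_abs, ← Real.sqrt_mul_self_eq_abs]
  exact Real.sqrt_le_sqrt <|
    single_le_sum (f := fun i => v i * v i) (fun i _ => mul_self_nonneg _) (mem_univ i)

theorem dotProduct_self_le_card_mul_sq_norm {ι : Type*} [Fintype ι] (v : ι → ℝ) :
    v ⬝ᵥ v ≤ Fintype.card ι * ‖v‖ ^ 2 := by
  calc v ⬝ᵥ v = ∑ i, ‖v i‖ ^ 2 := by simp [dotProduct, sq]
    _ ≤ ∑ _i : ι, ‖v‖ ^ 2 := by gcongr with i; exact norm_le_pi_norm v i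
    _ = _ := by simp

theorem normSq_smul_one {k : ℕ} (c : ℝ) (v : Fin k → ℝ) : normSq (c • 1) v = c * (v ⬝ᵥ v) := by
  simp [normSq, smul_mulVec]

theorem normSq_inv_succ_smul_one_le {k : ℕ} (v : Fin k → ℝ) :
    normSq (((k : ℝ) + 1)⁻¹ • 1) v ≤ ‖v‖ ^ 2 := by
  have := dotProduct_self_le_card_mul_sq_norm v
  rw [Fintype.card_fin] at this
  rw [normSq_smul_one, inv_mul_le_iff₀ (by positivity)]
  nlinarith [sq_nonneg ‖v‖]

theorem exists_norm_le_window_sums [Fintype p] {A : Matrix n n ℝ} {C : Matrix p n ℝ}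
    {d : ℕ → ℕ} {T : ℕ}
    (hobs : ∀ t, T < t → ObservableOn A C ((Icc (t - T - 1) (t - 1)).filter (· ∈ sampleSet d 0))) :
    ∃ L, 0 < L ∧ ∀ e v : ℕ → n → ℝ, (∀ s, e (s + 1) = A *ᵥ e s + v s) → ∀ t i,
      ‖e t‖ ≤ L * ((if t ≤ T + 1 then ‖e 0‖ else 0) + ∑ j ∈ Ico (t - (T + 1)) t, ‖v j‖
        + ∑ j ∈ (Ico (t - (T + 1)) t).filter (· ∈ sampleSet d i), ‖C *ᵥ e j‖) := by
  have hA : IsUnit A := (hobs (T + 2) (by omega)).isUnit fun s hs => by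
    simp only [mem_filter, mem_Icc] at hs
    omega
  obtain ⟨M, hM₀, hM⟩ := exists_norm_pow_mulVec_le A (T + 1)
  obtain ⟨c, hc₀, hc⟩ := exists_uniform_window_bound A C T
  have hML : M ≤ M * (c * (1 + (T + 1) * ‖C‖ * M) + 1) :=
    le_mul_of_one_le_right hM₀.le (le_add_of_nonneg_left (by positivity))
  refine ⟨_, hM₀.trans_le hML, fun e v he t i => ?_⟩
  set s := t - (T + 1)
  set V := ∑ j ∈ Ico s t, ‖v j‖
  set Y := ∑ j ∈ (Ico s t).filter (· ∈ sampleSet d i), ‖C *ᵥ e j‖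
  have hV₀ : 0 ≤ V := sum_nonneg fun _ _ => norm_nonneg _
  have hY₀ : 0 ≤ Y := sum_nonneg fun _ _ => norm_nonneg _
  split_ifs with ht
  · have hV : V = ∑ j ∈ Ico 0 t, ‖v j‖ := by simp only [V, s, Nat.sub_eq_zero_of_le ht]
    have hstep := norm_le_mul_norm_add_sum he hM (s := 0) ht
    rw [zero_add, ← hV] at hstep
    exact hstep.trans (mul_le_mul hML (by linarith) (by positivity) (hM₀.le.trans hML))
  · have ht' : t = s + (T + 1) := by omega
    have hW := filter_subset (· ∈ sampleSet d i) (Ico s (s + (T + 1)))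
    have hrec := norm_le_of_window_bound he hM hM₀.le C hc₀ hW
      (hc s _ hW (observableOn_sampleSet_window hobs hA i (by omega)))
    have hstep := norm_le_mul_norm_add_sum he hM (s := s) (r := T + 1) le_rfl
    rw [← ht'] at hrec hstep
    have hcomb : ‖e t‖ ≤ M * (c * (Y + (T + 1) * (‖C‖ * (M * V))) + V) :=
      hstep.trans (mul_le_mul_of_nonneg_left (add_le_add_left hrec _) hM₀.le)
    have hslack : 0 ≤ M * (c * V + c * ((T + 1) * ‖C‖ * M) * Y + Y) := by positivity
    linear_combination hcomb + hslack

theorem exists_iIOSS_estimate [Fintype p] {A : Matrix n n ℝ} {C : Matrix p n ℝ} {d : ℕ → ℕ}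
    {T : ℕ}
    (hobs : ∀ t, T < t → ObservableOn A C ((Icc (t - T - 1) (t - 1)).filter (· ∈ sampleSet d 0))) :
    ∃ κ, 0 < κ ∧ ∀ e v : ℕ → n → ℝ, (∀ s, e (s + 1) = A *ᵥ e s + v s) → ∀ t i,
      ‖e t‖ ^ 2 ≤ κ * iossBound (1 / 2) (sampleSet d i) (‖e 0‖ ^ 2) (fun j => ‖v j‖ ^ 2)
        (fun j => ‖C *ᵥ e j‖ ^ 2) t := by
  obtain ⟨L, hL, hbound⟩ := exists_norm_le_window_sums hobs
  refine ⟨3 * L ^ 2 * ((T + 1) * 2 ^ (T + 1)), by positivity, fun e v he t i => ?_⟩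
  have hV := sq_sum_filter_Ico_le Set.univ (fun j => ‖v j‖) T t
  have hY := sq_sum_filter_Ico_le (sampleSet d i) (fun j => ‖C *ᵥ e j‖) T t
  simp only [Set.mem_univ, filter_true, Set.indicator_univ] at hV
  have het := hbound e v he t i
  set a := if t ≤ T + 1 then ‖e 0‖ else 0
  set V := ∑ j ∈ Ico (t - (T + 1)) t, ‖v j‖
  set Y := ∑ j ∈ (Ico (t - (T + 1)) t).filter (· ∈ sampleSet d i), ‖C *ᵥ e j‖
  set S₀ := (1 / 2 : ℝ) ^ t * ‖e 0‖ ^ 2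
  set Sv := ∑ j ∈ range t, (1 / 2 : ℝ) ^ (t - j - 1) * ‖v j‖ ^ 2
  set Sy := ∑ j ∈ range t,
    (sampleSet d i).indicator (fun j => (1 / 2 : ℝ) ^ (t - j - 1) * ‖C *ᵥ e j‖ ^ 2) j
  have ha : a ^ 2 ≤ 2 ^ (T + 1) * S₀ := by
    simp only [a]
    split_ifs with ht
    · rw [← mul_assoc]
      exact le_mul_of_one_le_left (sq_nonneg _) (one_le_two_pow_mul_half_pow ht)
    · rw [zero_pow two_ne_zero]
      positivity
  have hSy : 0 ≤ Sy := sum_nonneg fun j _ => Set.indicator_nonneg (fun j _ => by positivity) j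
  have hslack : 0 ≤ T * 2 ^ (T + 1) * S₀ + (T + 1) * 2 ^ T * Sv + (T + 1) * 2 ^ T * Sy :=
    add_nonneg (by positivity) (mul_nonneg (by positivity) hSy)
  calc ‖e t‖ ^ 2 ≤ (L * (a + V + Y)) ^ 2 := pow_le_pow_left₀ (norm_nonneg _) het 2
    _ ≤ 3 * L ^ 2 * (a ^ 2 + V ^ 2 + Y ^ 2) := by
      nlinarith [sq_nonneg (a - V), sq_nonneg (a - Y), sq_nonneg (V - Y), sq_nonneg L]
    _ ≤ 3 * L ^ 2 * ((T + 1) * 2 ^ (T + 1) * (S₀ + Sv + Sy)) := by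
      gcongr
      linear_combination ha + hV + hY + hslack
    _ = _ := by simp only [iossBound]; ring

theorem sampleBased_observability_implies_sampleBased_iIOSS_general
    (n m p : ℕ) (A : Matrix (Fin n) (Fin n) ℝ) (B : Matrix (Fin n) (Fin m) ℝ)
    (C : Matrix (Fin p) (Fin n) ℝ) (D : Matrix (Fin p) (Fin m) ℝ)
    (d : ℕ → ℕ)
    (T : ℕ)
    (hrank : ∀ t, T < t →
      (Matrix.of fun (ri : ((Finset.Icc (t - T - 1) (t - 1)).filter
          (· ∈ sampleSet d 0) : Finset ℕ) × Fin p) (j : Fin n) =>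
        (C * A ^ (ri.1 : ℕ)) ri.2 j).rank = n) :
    sampleBasedExpIIOSS A B C D d := by
  obtain ⟨κ, hκ, hest⟩ := exists_iIOSS_estimate fun t ht =>
    ObservableOn.of_rank_eq ((hrank t ht).trans (Fintype.card_fin n).symm)
  -- `Fin n → ℝ` carries the sup norm, and `v ⬝ᵥ v ≤ n * ‖v‖ ^ 2` is absorbed into `P1`
  refine ⟨((n : ℝ) + 1)⁻¹ • 1, κ • 1, κ • 1, κ • 1, 1 / 2, PosDef.one.smul (by positivity),
    PosDef.one.smul hκ, PosSemidef.one.smul hκ.le, PosSemidef.one.smul hκ.le, by norm_num,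
    by norm_num, fun x x' u w w' hx hx' t i => ?_⟩
  have he : ∀ s, (x - x') (s + 1) = A *ᵥ (x - x') s + (w - w') s := fun s => by
    simp only [Pi.sub_apply, hx, hx', mulVec_sub]
    abel
  have hout : ∀ j, C *ᵥ x j + D *ᵥ u j - (C *ᵥ x' j + D *ᵥ u j) = C *ᵥ (x j - x' j) := fun j => by
    rw [add_sub_add_right_eq_sub, mulVec_sub]
  simp only [hout]
  calc _ ≤ ‖x t - x' t‖ ^ 2 := normSq_inv_succ_smul_one_le _
    _ ≤ κ * iossBound (1 / 2) (sampleSet d i) (‖x 0 - x' 0‖ ^ 2) (fun j => ‖w j - w' j‖ ^ 2)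
          (fun j => ‖C *ᵥ (x j - x' j)‖ ^ 2) t := hest _ _ he t i
    _ ≤ κ * iossBound (1 / 2) (sampleSet d i) ((x 0 - x' 0) ⬝ᵥ (x 0 - x' 0))
          (fun j => (w j - w' j) ⬝ᵥ (w j - w' j))
          (fun j => C *ᵥ (x j - x' j) ⬝ᵥ C *ᵥ (x j - x' j)) t := by
      gcongr
      exact iossBound_mono (by norm_num) _ (sq_norm_le_dotProduct_self _)
        (fun j => sq_norm_le_dotProduct_self _) (fun j => sq_norm_le_dotProduct_self _) t
    _ = _ := by rw [mul_iossBound]; simp only [iossBound, normSq_smul_one]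

/-- Theorem 2 of the paper. If there is a finite `T` such that for every
`t > T` the sample-based observability matrix with time indices in `K_1 ∩ [t−T−1, t−1]`
(stacked block rows `C A^s`) has full column rank `n`, then the linear system is
sample-based exponentially i-IOSS with respect to `K`. -/
theorem sampleBased_observability_implies_sampleBased_iIOSS
    (n m p : ℕ) (A : Matrix (Fin n) (Fin n) ℝ) (B : Matrix (Fin n) (Fin m) ℝ)
    (C : Matrix (Fin p) (Fin n) ℝ) (D : Matrix (Fin p) (Fin m) ℝ)
    (d : ℕ → ℕ) (dmax : ℕ) (hd : ∀ i, d i ≤ dmax)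
    (T : ℕ)
    (hrank : ∀ t, T < t →
      (Matrix.of fun (ri : ((Finset.Icc (t - T - 1) (t - 1)).filter
          (· ∈ sampleSet d 0) : Finset ℕ) × Fin p) (j : Fin n) =>
        (C * A ^ (ri.1 : ℕ)) ri.2 j).rank = n) :
    sampleBasedExpIIOSS A B C D d :=
  sampleBased_observability_implies_sampleBased_iIOSS_general n m p A B C D d T hrank

end
end

section
/- Consider the sample-based MHE optimization problem at time t with horizon M_t = min{t, M + δ_t}. Suppose at time t we have δ_t > 0 (no measurement in K_s occurred in the interval [t−δ_t, t−1]). If (x̂*_{t−δ_t−M_{t−δ_t}|t−δ_t}, ŵ*_{·|t−δ_t}) is a minimizer of the MHE problem at time t−δ_t, and the trajectory obtained by extending the corresponding optimal trajectory with zero disturbances over [t−δ_t, t−1] remains feasible (its states lie in X and its outputs in Y, with 0 ∈ W), then a minimizer of the MHE problem at time t is given by: x̂*_{t−M_t|t} = x̂*_{t−δ_t−M_{t−δ_t}|t−δ_t}, ŵ*_{j|t} = ŵ*_{j|t−δ_t} for j ∈ [t−M_t, t−δ_t−1], and ŵ*_{j|t} = 0 for j ∈ [t−δ_t, t−1]. In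 particular, the estimate x̂_t = x̂*_{t|t} equals the open-loop prediction obtained by iterating x̂_{s+1} = f(x̂_s, u_s, 0) from x̂_{t−δ_t}. -/
open scoped Classical

noncomputable section

/-- Euclidean norm of a vector in `ℝ^k`. -/
def enorm {k : ℕ} (v : Fin k → ℝ) : ℝ := Real.sqrt (∑ i, v i ^ 2)

/-- Time of the most recent available measurement strictly before time `t`
(`max {0, j ∈ Ks : j < t}`). -/
def lastMeas (Ks : Set ℕ) (t : ℕ) : ℕ := sSup (insert 0 {j | j ∈ Ks ∧ j < t})

/-- `δ_t = t − 1 − max{0, j ∈ Ks : j < t}`: time elapsed since the last measurement. -/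
def delta (Ks : Set ℕ) (t : ℕ) : ℕ := t - 1 - lastMeas Ks t

/-- Time-varying horizon length `M_t = min {t, M + δ_t}`. -/
def horizon (Ks : Set ℕ) (M t : ℕ) : ℕ := min t (M + delta Ks t)

/-- State at time `t0 + k` of the trajectory started at state `z` at time `t0` and driven by
the input `u` and disturbance `ω` through the dynamics `f`. -/
def rollout {n m q : ℕ} (f : (Fin n → ℝ) → (Fin m → ℝ) → (Fin q → ℝ) → (Fin n → ℝ))
    (u : ℕ → Fin m → ℝ) (ω : ℕ → Fin q → ℝ) (t0 : ℕ) (z : Fin n → ℝ) : ℕ → Fin n → ℝ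
  | 0 => z
  | k + 1 => f (rollout f u ω t0 z k) (u (t0 + k)) (ω (t0 + k))

/-- Feasibility of the decision variables `(z, ω)` (initial state `x̂_{t−L|t}` and
disturbance sequence) for the MHE problem at time `t` with window length `L`:
the induced state/disturbance/output sequence lies in `X`/`W`/`Y`. -/
def Feasible {n m q p : ℕ} (f : (Fin n → ℝ) → (Fin m → ℝ) → (Fin q → ℝ) → (Fin n → ℝ))
    (hout : (Fin n → ℝ) → (Fin m → ℝ) → (Fin q → ℝ) → (Fin p → ℝ))
    (X : Set (Fin n → ℝ)) (W : Set (Fin q → ℝ)) (Y : Set (Fin p → ℝ))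
    (u : ℕ → Fin m → ℝ) (t L : ℕ) (z : Fin n → ℝ) (ω : ℕ → Fin q → ℝ) : Prop :=
  (∀ k ≤ L, rollout f u ω (t - L) z k ∈ X) ∧
  (∀ k < L, ω (t - L + k) ∈ W) ∧
  (∀ k < L, hout (rollout f u ω (t - L) z k) (u (t - L + k)) (ω (t - L + k)) ∈ Y)

/-- MHE cost at time `t` with window length `L`, prior estimate `prior = x̂_{t−L}` and
measured outputs `y` (only measurements at times in `Ks` enter the output term). -/
def mheCost {n m q p : ℕ} (f : (Fin n → ℝ) → (Fin m → ℝ) → (Fin q → ℝ) → (Fin n → ℝ))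
    (hout : (Fin n → ℝ) → (Fin m → ℝ) → (Fin q → ℝ) → (Fin p → ℝ))
    (P2 : Matrix (Fin n) (Fin n) ℝ) (Q : Matrix (Fin q) (Fin q) ℝ)
    (R : Matrix (Fin p) (Fin p) ℝ) (η : ℝ) (Ks : Set ℕ)
    (u : ℕ → Fin m → ℝ) (y : ℕ → Fin p → ℝ) (prior : Fin n → ℝ)
    (t L : ℕ) (z : Fin n → ℝ) (ω : ℕ → Fin q → ℝ) : ℝ :=
  2 * η ^ L * normSq P2 (z - prior)
    + ∑ k ∈ Finset.range L, 2 * η ^ (L - k - 1) * normSq Q (ω (t - L + k))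
    + ∑ k ∈ Finset.range L, Set.indicator Ks
        (fun _ => η ^ (L - k - 1) * normSq R
          (hout (rollout f u ω (t - L) z k) (u (t - L + k)) (ω (t - L + k)) - y (t - L + k)))
        (t - L + k)

/-! While no sample arrives, the window of the MHE problem grows by exactly the elapsed time, and
the cost at time `s + δ` is `η^δ` times the cost at time `s` plus the disturbance penalty on the
`δ` new steps: the output term gets no new summands. Restricting any feasible candidate at time
`s + δ` to the old window therefore costs at least `η^δ` times the old optimum, which the zero
extension of the old minimizer attains. -/

lemma bddAbove_measTimes (Ks : Set ℕ) (t : ℕ) : BddAbove (insert 0 {j | j ∈ Ks ∧ j < t}) :=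
  ⟨t, fun _ hi => hi.elim (fun h => h ▸ Nat.zero_le t) fun h => h.2.le⟩

lemma le_lastMeas {Ks : Set ℕ} {t j : ℕ} (hj : j ∈ Ks) (hjt : j < t) : j ≤ lastMeas Ks t :=
  le_csSup (bddAbove_measTimes Ks t) (Or.inr ⟨hj, hjt⟩)

lemma lastMeas_le_pred (Ks : Set ℕ) (t : ℕ) : lastMeas Ks t ≤ t - 1 :=
  csSup_le ⟨0, Set.mem_insert _ _⟩ (by rintro i (rfl | ⟨-, hi⟩) <;> omega)

lemma notMem_of_lastMeas_lt {Ks : Set ℕ} {t j : ℕ} (h : lastMeas Ks t < j) (hjt : j < t) :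
    j ∉ Ks :=
  fun hj => (le_lastMeas hj hjt).not_gt h

lemma lastMeas_eq_of_lastMeas_lt {Ks : Set ℕ} {s t : ℕ} (hs : lastMeas Ks t < s) (hst : s ≤ t) :
    lastMeas Ks s = lastMeas Ks t := by
  refine le_antisymm (csSup_le ⟨0, Set.mem_insert _ _⟩ ?_) ?_
  · rintro i (rfl | ⟨hi, his⟩)
    · exact Nat.zero_le _
    · exact le_lastMeas hi (by omega)
  · rcases Nat.sSup_mem ⟨0, Set.mem_insert _ _⟩ (bddAbove_measTimes Ks t) with h | ⟨hK, -⟩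
    · exact h.trans_le (Nat.zero_le _)
    · exact le_lastMeas hK hs

lemma delta_le (Ks : Set ℕ) (t : ℕ) : delta Ks t ≤ t := by
  unfold delta; omega

lemma lastMeas_sub_delta (Ks : Set ℕ) (t : ℕ) :
    lastMeas Ks (t - delta Ks t) = lastMeas Ks t := by
  have hL := lastMeas_le_pred Ks t
  rcases Nat.eq_zero_or_pos t with rfl | ht
  · simp
  · exact lastMeas_eq_of_lastMeas_lt (by unfold delta; omega) (Nat.sub_le t _)

lemma delta_sub_delta (Ks : Set ℕ) (t : ℕ) : delta Ks (t - delta Ks t) = 0 := by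
  have hL := lastMeas_le_pred Ks t
  have h := lastMeas_sub_delta Ks t
  unfold delta at h ⊢
  omega

lemma sub_delta_add_notMem {Ks : Set ℕ} {t k : ℕ} (hk : k < delta Ks t) :
    t - delta Ks t + k ∉ Ks := by
  have hL := lastMeas_le_pred Ks t
  unfold delta at hk ⊢
  exact notMem_of_lastMeas_lt (t := t) (by omega) (by omega)

lemma horizon_eq_horizon_sub_delta_add (Ks : Set ℕ) (M t : ℕ) :
    horizon Ks M t = horizon Ks M (t - delta Ks t) + delta Ks t := by
  have := delta_le Ks t
  unfold horizon
  rw [delta_sub_delta]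
  omega

section MHE

variable {n m q p : ℕ} {f : (Fin n → ℝ) → (Fin m → ℝ) → (Fin q → ℝ) → (Fin n → ℝ)}
  {hout : (Fin n → ℝ) → (Fin m → ℝ) → (Fin q → ℝ) → (Fin p → ℝ)}
  {X : Set (Fin n → ℝ)} {W : Set (Fin q → ℝ)} {Y : Set (Fin p → ℝ)}
  {P2 : Matrix (Fin n) (Fin n) ℝ} {Q : Matrix (Fin q) (Fin q) ℝ} {R : Matrix (Fin p) (Fin p) ℝ}
  {η : ℝ} {Ks : Set ℕ} {u : ℕ → Fin m → ℝ} {y : ℕ → Fin p → ℝ} {prior : Fin n → ℝ}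

def zeroExtend (ω : ℕ → Fin q → ℝ) (s : ℕ) : ℕ → Fin q → ℝ :=
  fun j => if j < s then ω j else 0

variable (f hout X W Y P2 Q R η Ks u y prior) in
def IsMHEMinimizer (t L : ℕ) (z : Fin n → ℝ) (ω : ℕ → Fin q → ℝ) : Prop :=
  ∀ (z' : Fin n → ℝ) (ω' : ℕ → Fin q → ℝ), Feasible f hout X W Y u t L z' ω' →
    mheCost f hout P2 Q R η Ks u y prior t L z ω ≤ mheCost f hout P2 Q R η Ks u y prior t L z' ω'

lemma rollout_congr {ω ω' : ℕ → Fin q → ℝ} {t0 k : ℕ} (z : Fin n → ℝ)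
    (h : ∀ j < k, ω (t0 + j) = ω' (t0 + j)) : rollout f u ω t0 z k = rollout f u ω' t0 z k := by
  induction k with
  | zero => rfl
  | succ k ih =>
    simp only [rollout]
    rw [ih fun j hj => h j (by omega), h k (by omega)]

lemma rollout_add (ω : ℕ → Fin q → ℝ) (t0 a b : ℕ) (z : Fin n → ℝ) :
    rollout f u ω t0 z (a + b) = rollout f u ω (t0 + a) (rollout f u ω t0 z a) b := by
  induction b with
  | zero => rfl
  | succ b ih =>
    rw [← Nat.add_assoc]
    simp only [rollout]
    rw [ih, Nat.add_assoc]

lemma rollout_zeroExtend (ω : ℕ → Fin q → ℝ) {s L : ℕ} (hL : L ≤ s) (δ : ℕ) (z : Fin n → ℝ) :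
    rollout f u (zeroExtend ω s) (s - L) z (L + δ)
      = rollout f u (fun _ => 0) s (rollout f u ω (s - L) z L) δ := by
  rw [rollout_add, Nat.sub_add_cancel hL,
    rollout_congr z fun j hj => if_pos (by omega : s - L + j < s)]
  exact rollout_congr _ fun j _ => if_neg (by omega)

lemma Feasible.of_add {s L δ : ℕ} {z : Fin n → ℝ} {ω : ℕ → Fin q → ℝ}
    (hf : Feasible f hout X W Y u (s + δ) (L + δ) z ω) : Feasible f hout X W Y u s L z ω := by
  obtain ⟨hX, hW, hY⟩ := hf
  rw [Nat.add_sub_add_right] at hX hW hY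
  exact ⟨fun k hk => hX k (by omega), fun k hk => hW k (by omega), fun k hk => hY k (by omega)⟩

lemma mheCost_congr {t L : ℕ} (z : Fin n → ℝ) {ω ω' : ℕ → Fin q → ℝ}
    (h : ∀ k < L, ω (t - L + k) = ω' (t - L + k)) :
    mheCost f hout P2 Q R η Ks u y prior t L z ω
      = mheCost f hout P2 Q R η Ks u y prior t L z ω' := by
  unfold mheCost
  congr 1
  · exact congrArg _ (Finset.sum_congr rfl fun k hk => by rw [h k (Finset.mem_range.mp hk)])
  · refine Finset.sum_congr rfl fun k hk => ?_
    have hk := Finset.mem_range.mp hk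
    rw [h k hk, rollout_congr z fun j hj => h j (by omega)]

lemma normSq_nonneg {k : ℕ} {P : Matrix (Fin k) (Fin k) ℝ} (hP : P.PosSemidef) (v : Fin k → ℝ) :
    0 ≤ normSq P v := by
  simpa [normSq] using hP.dotProduct_mulVec_nonneg v

lemma mheCost_add {s L δ : ℕ} (hL : L ≤ s) (hgap : ∀ k < δ, s + k ∉ Ks) (z : Fin n → ℝ)
    (ω : ℕ → Fin q → ℝ) :
    mheCost f hout P2 Q R η Ks u y prior (s + δ) (L + δ) z ω
      = η ^ δ * mheCost f hout P2 Q R η Ks u y prior s L z ω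
        + ∑ k ∈ Finset.range δ, 2 * η ^ (δ - k - 1) * normSq Q (ω (s + k)) := by
  have hpow : ∀ k ∈ Finset.range L, η ^ (L + δ - k - 1) = η ^ δ * η ^ (L - k - 1) := by
    intro k hk
    rw [← pow_add]
    congr 1
    have := Finset.mem_range.mp hk
    omega
  have hidx : ∀ k, s - L + (L + k) = s + k := fun k => by omega
  unfold mheCost
  simp +contextual only [Nat.add_sub_add_right, Nat.add_sub_add_left, Finset.sum_range_add, hidx,
    hpow, mul_add, Finset.mul_sum, ← Set.indicator_const_mul]
  rw [Finset.sum_eq_zero (s := Finset.range δ) fun k hk =>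
    Set.indicator_of_notMem (hgap k (Finset.mem_range.mp hk)) _]
  simp only [pow_add, add_zero, mul_assoc, mul_left_comm _ (η ^ δ)]
  ring

lemma IsMHEMinimizer.add_zeroExtend (hQ : Q.PosSemidef) (hη : 0 ≤ η) {s L δ : ℕ} (hL : L ≤ s)
    (hgap : ∀ k < δ, s + k ∉ Ks) {z : Fin n → ℝ} {ω : ℕ → Fin q → ℝ}
    (hmin : IsMHEMinimizer f hout X W Y P2 Q R η Ks u y prior s L z ω) :
    IsMHEMinimizer f hout X W Y P2 Q R η Ks u y prior (s + δ) (L + δ) z (zeroExtend ω s) := by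
  intro z' ω' hfeas
  have hold : mheCost f hout P2 Q R η Ks u y prior s L z (zeroExtend ω s)
      = mheCost f hout P2 Q R η Ks u y prior s L z ω :=
    mheCost_congr z fun k _ => if_pos (by omega)
  have hnew : ∑ k ∈ Finset.range δ, 2 * η ^ (δ - k - 1) * normSq Q (zeroExtend ω s (s + k)) = 0 :=
    Finset.sum_eq_zero fun k _ => by simp [zeroExtend, normSq]
  have hpenalty : 0 ≤ ∑ k ∈ Finset.range δ, 2 * η ^ (δ - k - 1) * normSq Q (ω' (s + k)) :=
    Finset.sum_nonneg fun k _ => mul_nonneg (by positivity) (normSq_nonneg hQ _)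
  rw [mheCost_add hL hgap, mheCost_add hL hgap, hold, hnew, add_zero]
  calc η ^ δ * mheCost f hout P2 Q R η Ks u y prior s L z ω
      ≤ η ^ δ * mheCost f hout P2 Q R η Ks u y prior s L z' ω' :=
        mul_le_mul_of_nonneg_left (hmin z' ω' hfeas.of_add) (pow_nonneg hη δ)
    _ ≤ _ := le_add_of_nonneg_right hpenalty

end MHE

theorem mhe_open_loop_prediction_general
    {n m q p : ℕ}
    (f : (Fin n → ℝ) → (Fin m → ℝ) → (Fin q → ℝ) → (Fin n → ℝ))
    (hout : (Fin n → ℝ) → (Fin m → ℝ) → (Fin q → ℝ) → (Fin p → ℝ))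
    (X : Set (Fin n → ℝ)) (W : Set (Fin q → ℝ)) (Y : Set (Fin p → ℝ))
    (P2 : Matrix (Fin n) (Fin n) ℝ) (Q : Matrix (Fin q) (Fin q) ℝ)
    (R : Matrix (Fin p) (Fin p) ℝ) (η : ℝ)
    (hQ : Q.PosSemidef)
    (hη0 : 0 ≤ η)
    (Ks : Set ℕ) (M : ℕ)
    (u : ℕ → Fin m → ℝ) (y : ℕ → Fin p → ℝ)
    -- prior estimates (the estimate produced at each past time, used in the cost)
    (xhat : ℕ → Fin n → ℝ)
    -- current time, with δ_t > 0, and the time s = t − δ_t of the last update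
    (t s : ℕ) (hst : s = t - delta Ks t)
    -- (z⋆, ω⋆) is a minimizer of the MHE problem at time s
    (zstar : Fin n → ℝ) (ωstar : ℕ → Fin q → ℝ)
    (hopt_s : ∀ (z' : Fin n → ℝ) (ω' : ℕ → Fin q → ℝ),
      Feasible f hout X W Y u s (horizon Ks M s) z' ω' →
      mheCost f hout P2 Q R η Ks u y (xhat (s - horizon Ks M s)) s (horizon Ks M s) zstar ωstar
        ≤ mheCost f hout P2 Q R η Ks u y (xhat (s - horizon Ks M s)) s (horizon Ks M s) z' ω')
    -- the extension of ω⋆ by zero disturbances over [s, t−1]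
    (ωext : ℕ → Fin q → ℝ) (hωext : ∀ j, ωext j = if j < s then ωstar j else 0) :
    -- (z⋆, ωext) is a minimizer of the MHE problem at time t …
    (∀ (z' : Fin n → ℝ) (ω' : ℕ → Fin q → ℝ),
      Feasible f hout X W Y u t (horizon Ks M t) z' ω' →
      mheCost f hout P2 Q R η Ks u y (xhat (t - horizon Ks M t)) t (horizon Ks M t) zstar ωext
        ≤ mheCost f hout P2 Q R η Ks u y (xhat (t - horizon Ks M t)) t (horizon Ks M t) z' ω')
    -- … and the resulting estimate x̂_t is the open-loop prediction from x̂_s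
    ∧ rollout f u ωext (t - horizon Ks M t) zstar (horizon Ks M t)
        = rollout f u (fun _ => (0 : Fin q → ℝ)) s
            (rollout f u ωstar (s - horizon Ks M s) zstar (horizon Ks M s)) (delta Ks t) := by
  obtain rfl : ωext = zeroExtend ωstar s := funext hωext
  have hgap : ∀ k < delta Ks t, s + k ∉ Ks := fun k hk => hst ▸ sub_delta_add_notMem hk
  have hL := horizon_eq_horizon_sub_delta_add Ks M t
  rw [← hst] at hL
  have hLs : horizon Ks M s ≤ s := min_le_left _ _
  have ht : t = s + delta Ks t := by have := delta_le Ks t; omega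
  have hbase : t - horizon Ks M t = s - horizon Ks M s := by omega
  rw [hbase, hL]
  generalize delta Ks t = δ at ht hgap ⊢
  subst ht
  exact ⟨IsMHEMinimizer.add_zeroExtend hQ hη0 hLs hgap hopt_s, rollout_zeroExtend ωstar hLs δ zstar⟩

/-- Proposition 1. If no measurement arrived in `[t−δ_t, t−1]` (i.e.
`δ_t > 0`), if `(z⋆, ω⋆)` is a minimizer of the MHE problem at time `s = t − δ_t`, and if
its extension by zero disturbances over `[s, t−1]` remains feasible (with `0 ∈ W`), then
this extension is a minimizer of the MHE problem at time `t`; in particular the estimate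
`x̂_t` equals the open-loop prediction obtained by iterating `x̂ ↦ f(x̂, u, 0)` for `δ_t`
steps from the estimate `x̂_{t−δ_t}` produced at time `s`. -/
theorem mhe_open_loop_prediction
    {n m q p : ℕ}
    (f : (Fin n → ℝ) → (Fin m → ℝ) → (Fin q → ℝ) → (Fin n → ℝ))
    (hout : (Fin n → ℝ) → (Fin m → ℝ) → (Fin q → ℝ) → (Fin p → ℝ))
    (X : Set (Fin n → ℝ)) (W : Set (Fin q → ℝ)) (Y : Set (Fin p → ℝ))
    (h0W : (0 : Fin q → ℝ) ∈ W)
    (P2 : Matrix (Fin n) (Fin n) ℝ) (Q : Matrix (Fin q) (Fin q) ℝ)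
    (R : Matrix (Fin p) (Fin p) ℝ) (η : ℝ)
    (hP2 : P2.PosDef) (hQ : Q.PosSemidef) (hR : R.PosSemidef)
    (hη0 : 0 ≤ η) (hη1 : η < 1)
    (Ks : Set ℕ) (M : ℕ)
    (u : ℕ → Fin m → ℝ) (y : ℕ → Fin p → ℝ)
    -- prior estimates (the estimate produced at each past time, used in the cost)
    (xhat : ℕ → Fin n → ℝ)
    -- current time, with δ_t > 0, and the time s = t − δ_t of the last update
    (t s : ℕ) (hδ : 0 < delta Ks t) (hst : s = t - delta Ks t)
    -- (z⋆, ω⋆) is a minimizer of the MHE problem at time s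
    (zstar : Fin n → ℝ) (ωstar : ℕ → Fin q → ℝ)
    (hfeas_s : Feasible f hout X W Y u s (horizon Ks M s) zstar ωstar)
    (hopt_s : ∀ (z' : Fin n → ℝ) (ω' : ℕ → Fin q → ℝ),
      Feasible f hout X W Y u s (horizon Ks M s) z' ω' →
      mheCost f hout P2 Q R η Ks u y (xhat (s - horizon Ks M s)) s (horizon Ks M s) zstar ωstar
        ≤ mheCost f hout P2 Q R η Ks u y (xhat (s - horizon Ks M s)) s (horizon Ks M s) z' ω')
    -- the extension of ω⋆ by zero disturbances over [s, t−1]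
    (ωext : ℕ → Fin q → ℝ) (hωext : ∀ j, ωext j = if j < s then ωstar j else 0)
    -- the extended trajectory remains feasible for the problem at time t
    (hfeas_t : Feasible f hout X W Y u t (horizon Ks M t) zstar ωext) :
    -- (z⋆, ωext) is a minimizer of the MHE problem at time t …
    (∀ (z' : Fin n → ℝ) (ω' : ℕ → Fin q → ℝ),
      Feasible f hout X W Y u t (horizon Ks M t) z' ω' →
      mheCost f hout P2 Q R η Ks u y (xhat (t - horizon Ks M t)) t (horizon Ks M t) zstar ωext
        ≤ mheCost f hout P2 Q R η Ks u y (xhat (t - horizon Ks M t)) t (horizon Ks M t) z' ω')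
    -- … and the resulting estimate x̂_t is the open-loop prediction from x̂_s
    ∧ rollout f u ωext (t - horizon Ks M t) zstar (horizon Ks M t)
        = rollout f u (fun _ => (0 : Fin q → ℝ)) s
            (rollout f u ωstar (s - horizon Ks M s) zstar (horizon Ks M s)) (delta Ks t) :=
  mhe_open_loop_prediction_general f hout X W Y P2 Q R η hQ hη0 Ks M u y xhat t s hst zstar ωstar
    hopt_s ωext hωext
end
end
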